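/- The exponential task robustness, defined as the average (1/n)·Σ_k η_{j_k}^task, is sound: it is nonnegative if and only if η_{j_m} ≥ 0, i.e., if and only if at least m of the values η_{j_1},...,η_{j_n} are nonnegative. -/
import Mathlib


/-- Effective task robustness `η_{j_k}^task`. -/
noncomputable def etaTask (α ηm ηk : ℝ) : ℝ :=
  if 0 < ηm then 2 * α * (Real.exp ηm - 1) / (1 + Real.exp (-α * (ηk - ηm)))
  else -2 * α * (Real.exp (-ηm) - 1) / (1 + Real.exp (α * (ηk - ηm)))

theorem etaTask_sound {n : ℕ} (α : ℝ) (hα : 0 < α) (η : Fin n → ℝ)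
    (hsorted : ∀ k l : Fin n, k ≤ l → η l ≤ η k) (m : Fin n) :
    (0 ≤ (1 / (n : ℝ)) * ∑ k, etaTask α (η m) (η k) ↔ 0 ≤ η m) ∧
    (0 ≤ η m ↔ (m : ℕ) + 1 ≤ (Finset.univ.filter (fun k => 0 ≤ η k)).card) := by
  have hn : 0 < n := m.pos
  have hn' : (0:ℝ) < (n:ℝ) := by exact_mod_cast hn
  constructor
  · rcases lt_trichotomy (η m) 0 with hneg | hzero | hpos
    · constructor
      · intro hS
        exfalso
        have hterm : ∀ k : Fin n, etaTask α (η m) (η k) < 0 := by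
          intro k
          unfold etaTask
          rw [if_neg (not_lt.mpr hneg.le)]
          apply div_neg_of_neg_of_pos
          · have h1 : -η m + 1 ≤ Real.exp (-η m) := Real.add_one_le_exp (-η m)
            nlinarith
          · positivity
        have hsum : ∑ k, etaTask α (η m) (η k) < 0 :=
          Finset.sum_neg (fun k _ => hterm k) ⟨m, Finset.mem_univ m⟩
        have : (1/(n:ℝ)) * ∑ k, etaTask α (η m) (η k) < 0 := by
          apply mul_neg_of_pos_of_neg
          · positivity
          · exact hsum
        linarith
      · intro h; linarith
    · have hterm : ∀ k : Fin n, etaTask α (η m) (η k) = 0 := by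
        intro k
        unfold etaTask
        rw [if_neg (by rw [hzero]; exact lt_irrefl 0), hzero]
        simp
      constructor
      · intro _; rw [hzero]
      · intro _
        rw [Finset.sum_congr rfl (fun k _ => hterm k)]
        simp
    · constructor
      · intro _; exact hpos.le
      · intro _
        have hterm : ∀ k : Fin n, 0 ≤ etaTask α (η m) (η k) := by
          intro k
          unfold etaTask
          rw [if_pos hpos]
          apply div_nonneg
          · have h1 : η m + 1 ≤ Real.exp (η m) := Real.add_one_le_exp (η m)
            nlinarith
          · positivity
        have hsum : 0 ≤ ∑ k, etaTask α (η m) (η k) :=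
          Finset.sum_nonneg fun k _ => hterm k
        have : (0:ℝ) ≤ 1/(n:ℝ) := by positivity
        exact mul_nonneg this hsum
  · constructor
    · intro h
      have hsub : Finset.Iic m ⊆ Finset.univ.filter (fun k => 0 ≤ η k) := by
        intro k hk
        simp only [Finset.mem_Iic] at hk
        simp only [Finset.mem_filter, Finset.mem_univ, true_and]
        exact le_trans h (hsorted k m hk)
      have hcard := Finset.card_le_card hsub
      rwa [Fin.card_Iic] at hcard
    · intro hcard
      by_contra hneg
      push_neg at hneg
      have hsub : Finset.univ.filter (fun k => 0 ≤ η k) ⊆ Finset.Iio m := by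
        intro k hk
        simp only [Finset.mem_filter, Finset.mem_univ, true_and] at hk
        simp only [Finset.mem_Iio]
        by_contra hk'
        push_neg at hk'
        have := hsorted m k hk'
        linarith
      have hle := Finset.card_le_card hsub
      rw [Fin.card_Iio] at hle
      omega
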